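/- arXiv:2509.07329 — 2 statements merged into one kernel-verified Lean document; each statement's English description precedes it below -/
import Mathlib

section
/- Let F : ℝ → ℝ be integrable, even, real-valued, with ∫_ℝ F(ξ) dξ = 1, and define F̂(t) = ∫_ℝ F(u) cos(ut) du. Then for all γ, t ∈ ℝ one has 1 − F̂(t)·cos(γt) = ∫_ℝ (1 − cos(ξt)) · F(γ − ξ) dξ. -/
/-!
Expanding `cos ((γ - u) t) = cos (γ t) cos (u t) + sin (γ t) sin (u t)`, the average of
`cos ((γ - u) t)` against `F(u) du` is `F̂(t) cos (γ t)`: the sine term drops out because `F` is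
even. Together with `∫ F = 1` and the substitution `ξ = γ - u` this is the identity.
-/

open MeasureTheory Real

theorem Function.Odd.integral_eq_zero {G E : Type*} [MeasurableSpace G] [AddGroup G]
    [MeasurableNeg G] [NormedAddCommGroup E] [NormedSpace ℝ E] {μ : Measure G} [μ.IsNegInvariant]
    {f : G → E} (hf : f.Odd) : ∫ x, f x ∂μ = 0 := by
  have h := integral_neg_eq_self f μ
  simp only [hf.eq, integral_neg] at h
  have h2 : (2 : ℝ) • ∫ x, f x ∂μ = 0 := by
    rw [two_smul]
    nth_rewrite 1 [← h]
    exact neg_add_cancel _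
  exact (smul_eq_zero.mp h2).resolve_left two_ne_zero

theorem MeasureTheory.Integrable.mul_cos {α : Type*} [MeasurableSpace α] {μ : Measure α}
    {F : α → ℝ} (hF : Integrable F μ) (g : α → ℝ) (hg : Measurable g) :
    Integrable (fun u ↦ F u * cos (g u)) μ :=
  hF.mul_bdd (measurable_cos.comp hg).aestronglyMeasurable
    (ae_of_all _ fun _ ↦ (norm_eq_abs _).trans_le (abs_cos_le_one _))

theorem MeasureTheory.Integrable.mul_sin {α : Type*} [MeasurableSpace α] {μ : Measure α}
    {F : α → ℝ} (hF : Integrable F μ) (g : α → ℝ) (hg : Measurable g) :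
    Integrable (fun u ↦ F u * sin (g u)) μ :=
  hF.mul_bdd (measurable_sin.comp hg).aestronglyMeasurable
    (ae_of_all _ fun _ ↦ (norm_eq_abs _).trans_le (abs_sin_le_one _))

theorem Function.Even.integral_mul_sin_mul_eq_zero {F : ℝ → ℝ} (hF : F.Even) (t : ℝ) :
    ∫ u, F u * sin (u * t) = 0 :=
  Function.Odd.integral_eq_zero fun u ↦ by simp [hF.eq u, neg_mul, sin_neg]

theorem Function.Even.integral_mul_cos_sub_mul {F : ℝ → ℝ} (hFeven : F.Even) (hF : Integrable F)
    (γ t : ℝ) :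
    ∫ u, F u * cos ((γ - u) * t) = (∫ u, F u * cos (u * t)) * cos (γ * t) := by
  have hcos := hF.mul_cos (· * t) (by fun_prop)
  have hsin := hF.mul_sin (· * t) (by fun_prop)
  calc ∫ u, F u * cos ((γ - u) * t)
      = ∫ u, cos (γ * t) * (F u * cos (u * t)) + sin (γ * t) * (F u * sin (u * t)) := by
        congr 1 with u
        rw [sub_mul, cos_sub]
        ring
    _ = (∫ u, F u * cos (u * t)) * cos (γ * t) := by
        rw [integral_add (hcos.const_mul _) (hsin.const_mul _), integral_const_mul,
          integral_const_mul, hFeven.integral_mul_sin_mul_eq_zero, mul_zero, add_zero, mul_comm]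

/-- Two-way Fejér identity, general form: for any even real integrable probability
density `F` with cosine transform `F̂(t) = ∫ F(u) cos(ut) du`, one has
`1 − F̂(t) cos(γt) = ∫ (1 − cos(ξt)) F(γ − ξ) dξ` for all `γ, t`. -/
theorem two_way_fejer_identity (F : ℝ → ℝ)
    (hF : Integrable F (volume : Measure ℝ)) (hFeven : ∀ x, F (-x) = F x)
    (hFmass : ∫ ξ : ℝ, F ξ = 1) (γ t : ℝ) :
    1 - (∫ u : ℝ, F u * Real.cos (u * t)) * Real.cos (γ * t)
      = ∫ ξ : ℝ, (1 - Real.cos (ξ * t)) * F (γ - ξ) := by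
  calc 1 - (∫ u, F u * cos (u * t)) * cos (γ * t)
      = ∫ u, F u - F u * cos ((γ - u) * t) := by
        rw [integral_sub hF (hF.mul_cos _ (by fun_prop)), hFmass,
          Function.Even.integral_mul_cos_sub_mul hFeven hF]
    _ = ∫ ξ, (1 - cos (ξ * t)) * F (γ - ξ) := by
        rw [← integral_sub_left_eq_self _ volume γ]
        simp only [sub_sub_cancel]
        congr 1 with ξ
        ring
end

section
/- Let Λ > 0 and let F_Λ be the Fejér kernel on ℝ. Then for all γ, t ∈ ℝ one has 1 − max(1 − |t|/Λ, 0)·cos(γt) = ∫_ℝ (1 − cos(ξt)) · F_Λ(γ − ξ) dξ. -/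
/-!
The cosine transform of the tent `max (1 - |s|/Λ) 0` is computed by hand to be `2π F_Λ`.
Since the tent is even, continuous and integrable, and `F_Λ` is integrable, Fourier inversion
gives back `∫ F_Λ(u) cos(ut) du = max (1 - |t|/Λ) 0`; at `t = 0` this says `∫ F_Λ = 1`.
Substituting `ξ = γ - u` and expanding `cos((γ - u)t)` gives the identity, the sine term
vanishing because `F_Λ` is even.
-/

open MeasureTheory Real

/-- The Fejér kernel on ℝ: `F_Λ(x) = 2 sin²(Λx/2)/(π Λ x²)` for `x ≠ 0`,
with value `Λ/(2π)` at `x = 0`. -/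
noncomputable def fejerKernel (Λ : ℝ) (x : ℝ) : ℝ :=
  if x = 0 then Λ / (2 * π) else 2 * Real.sin (Λ * x / 2) ^ 2 / (π * Λ * x ^ 2)

section FejerKernel

variable {Λ : ℝ}

lemma fejerKernel_neg (Λ x : ℝ) : fejerKernel Λ (-x) = fejerKernel Λ x := by
  rcases eq_or_ne x 0 with rfl | hx
  · simp
  · simp only [fejerKernel, neg_eq_zero, hx, if_false, mul_neg, neg_div, sin_neg, neg_sq]

lemma fejerKernel_nonneg (hΛ : 0 < Λ) (x : ℝ) : 0 ≤ fejerKernel Λ x := by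
  unfold fejerKernel
  split_ifs <;> positivity

lemma fejerKernel_le (hΛ : 0 < Λ) (x : ℝ) : fejerKernel Λ x ≤ Λ / (2 * π) := by
  unfold fejerKernel
  split_ifs with hx
  · rfl
  · have hsin : sin (Λ * x / 2) ^ 2 ≤ (Λ * x / 2) ^ 2 := sin_sq_le_sq
    rw [div_le_div_iff₀ (by positivity) (by positivity)]
    nlinarith [pi_pos, pow_pos hΛ 2, sq_nonneg x]

lemma sq_mul_fejerKernel_le (hΛ : 0 < Λ) (x : ℝ) : x ^ 2 * fejerKernel Λ x ≤ 2 / (π * Λ) := by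
  unfold fejerKernel
  split_ifs with hx
  · simp only [hx]; norm_num; positivity
  · calc x ^ 2 * (2 * sin (Λ * x / 2) ^ 2 / (π * Λ * x ^ 2))
        = 2 * sin (Λ * x / 2) ^ 2 / (π * Λ) := by field_simp
      _ ≤ 2 * 1 / (π * Λ) := by gcongr; exact sin_sq_le_one _
      _ = 2 / (π * Λ) := by rw [mul_one]

lemma pi_mul_fejerKernel_of_ne_zero (hΛ : Λ ≠ 0) {x : ℝ} (hx : x ≠ 0) :
    π * fejerKernel Λ x = (1 - cos (Λ * x)) / (Λ * x ^ 2) := by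
  have half_angle : 1 - cos (Λ * x) = 2 * sin (Λ * x / 2) ^ 2 := by
    rw [sin_sq_eq_half_sub, show 2 * (Λ * x / 2) = Λ * x by ring]; ring
  rw [fejerKernel, if_neg hx, half_angle]
  field_simp

lemma measurable_fejerKernel (Λ : ℝ) : Measurable (fejerKernel Λ) :=
  Measurable.ite (measurableSet_singleton 0) measurable_const (by fun_prop)

lemma integrable_fejerKernel (hΛ : 0 < Λ) : Integrable (fejerKernel Λ) := by
  refine ((integrable_inv_one_add_sq.const_mul (Λ / (2 * π) + 2 / (π * Λ))).mono'
    (measurable_fejerKernel Λ).aestronglyMeasurable (ae_of_all _ fun x => ?_))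
  rw [norm_of_nonneg (fejerKernel_nonneg hΛ x), ← div_eq_mul_inv, le_div_iff₀ (by positivity)]
  linarith [fejerKernel_le hΛ x, sq_mul_fejerKernel_le hΛ x]

end FejerKernel

noncomputable def tent (Λ s : ℝ) : ℝ := max (1 - |s| / Λ) 0

section Tent

variable {Λ : ℝ}

lemma continuous_tent (Λ : ℝ) : Continuous (tent Λ) := by
  unfold tent; fun_prop

lemma tent_neg (Λ s : ℝ) : tent Λ (-s) = tent Λ s := by
  simp only [tent, abs_neg]

lemma tent_eq_zero_of_le_abs (hΛ : 0 < Λ) {s : ℝ} (hs : Λ ≤ |s|) : tent Λ s = 0 :=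
  max_eq_right (by rwa [sub_nonpos, one_le_div hΛ])

lemma tent_of_mem_Icc (hΛ : 0 < Λ) {s : ℝ} (hs : s ∈ Set.Icc 0 Λ) : tent Λ s = 1 - s / Λ := by
  rw [tent, abs_of_nonneg hs.1, max_eq_left (by rw [sub_nonneg, div_le_one hΛ]; exact hs.2)]

lemma hasCompactSupport_tent (hΛ : 0 < Λ) : HasCompactSupport (tent Λ) :=
  HasCompactSupport.intro (isCompact_Icc (a := -Λ) (b := Λ)) fun s hs =>
    tent_eq_zero_of_le_abs hΛ <| le_abs'.mpr <| by
      simp only [Set.mem_Icc, not_and_or, not_le] at hs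
      exact hs.imp le_of_lt le_of_lt

lemma integrable_tent (hΛ : 0 < Λ) : Integrable (tent Λ) :=
  (continuous_tent Λ).integrable_of_hasCompactSupport (hasCompactSupport_tent hΛ)

end Tent

lemma integral_eq_zero_of_odd {f : ℝ → ℝ} (hf : ∀ x, f (-x) = -f x) : ∫ x, f x = 0 := by
  have h := integral_neg_eq_self f volume
  simp only [hf, integral_neg] at h
  linarith

noncomputable def cosineTransform (g : ℝ → ℝ) (t : ℝ) : ℝ := ∫ u, cos (u * t) * g u

section CosineTransform

open FourierTransform

variable {g : ℝ → ℝ}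

lemma cosineTransform_const_mul (a : ℝ) (g : ℝ → ℝ) (t : ℝ) :
    cosineTransform (fun u => a * g u) t = a * cosineTransform g t := by
  simp only [cosineTransform, mul_left_comm _ a, integral_const_mul]

lemma integrable_cos_mul (hg : Integrable g) (t : ℝ) : Integrable fun u => cos (u * t) * g u :=
  hg.bdd_mul (c := 1) (by fun_prop) (ae_of_all _ fun _ => abs_cos_le_one _)

lemma integrable_sin_mul (hg : Integrable g) (t : ℝ) : Integrable fun u => sin (u * t) * g u :=
  hg.bdd_mul (c := 1) (by fun_prop) (ae_of_all _ fun _ => abs_sin_le_one _)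

lemma integral_sin_mul_eq_zero_of_even (hg : ∀ u, g (-u) = g u) (t : ℝ) :
    ∫ u, sin (u * t) * g u = 0 :=
  integral_eq_zero_of_odd fun u => by rw [hg, neg_mul, sin_neg, neg_mul]

lemma cosineTransform_neg (g : ℝ → ℝ) (t : ℝ) : cosineTransform g (-t) = cosineTransform g t := by
  simp only [cosineTransform, mul_neg, cos_neg]

lemma fourier_ofReal_eq_cosineTransform (hg : Integrable g) (hg_even : ∀ u, g (-u) = g u)
    (w : ℝ) : 𝓕 (fun u => (g u : ℂ)) w = cosineTransform g (2 * π * w) := by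
  have hsplit : ∀ u, Complex.exp (↑(-2 * π * u * w) * Complex.I) • (g u : ℂ)
      = ↑(cos (u * (2 * π * w)) * g u) - ↑(sin (u * (2 * π * w)) * g u) * Complex.I := by
    intro u
    rw [show -2 * π * u * w = -(u * (2 * π * w)) by ring, Complex.exp_mul_I, smul_eq_mul]
    push_cast
    rw [Complex.cos_neg, Complex.sin_neg]
    ring
  rw [Real.fourier_real_eq_integral_exp_smul, funext hsplit,
    integral_sub (integrable_cos_mul hg _).ofReal ((integrable_sin_mul hg _).ofReal.mul_const _),
    integral_mul_const, integral_complex_ofReal, integral_complex_ofReal,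
    integral_sin_mul_eq_zero_of_even hg_even, cosineTransform]
  simp

lemma cosineTransform_comp_mul_left (g : ℝ → ℝ) {a : ℝ} (ha : 0 < a) (t : ℝ) :
    cosineTransform (fun w => g (a * w)) (a * t) = a⁻¹ * cosineTransform g t := by
  have h := Measure.integral_comp_mul_left (fun u => cos (u * t) * g u) a
  simp only [abs_of_pos (inv_pos.mpr ha), smul_eq_mul] at h
  rw [cosineTransform, cosineTransform, ← h]
  simp only [mul_comm a, mul_assoc]

lemma cosineTransform_cosineTransform (hg_cont : Continuous g) (hg : Integrable g)
    (hg_even : ∀ u, g (-u) = g u) (hĝ : Integrable (cosineTransform g)) (t : ℝ) :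
    cosineTransform (cosineTransform g) t = 2 * π * g t := by
  have h2π : 0 < 2 * π := by positivity
  have hĝ_scaled : Integrable fun w => cosineTransform g (2 * π * w) := hĝ.comp_mul_left' h2π.ne'
  have hfourier : 𝓕 (fun u => (g u : ℂ)) = fun w => (cosineTransform g (2 * π * w) : ℂ) :=
    funext (fourier_ofReal_eq_cosineTransform hg hg_even)
  have hg_cont' : Continuous fun u => (g u : ℂ) := Complex.continuous_ofReal.comp hg_cont
  have hinv := congrFun (hg_cont'.fourierInv_fourier_eq hg.ofReal (hfourier ▸ hĝ_scaled.ofReal)) t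
  rw [fourierInv_eq_fourier_neg, hfourier, fourier_ofReal_eq_cosineTransform hĝ_scaled
    (fun w => by rw [mul_neg, cosineTransform_neg]), mul_neg, cosineTransform_neg,
    cosineTransform_comp_mul_left _ h2π] at hinv
  have := Complex.ofReal_injective hinv
  field_simp at this ⊢
  linarith

end CosineTransform

lemma integral_one_sub_div_mul_cos {Λ c : ℝ} (hΛ : Λ ≠ 0) (hc : c ≠ 0) :
    ∫ r in (0 : ℝ)..Λ, (1 - r / Λ) * cos (r * c) = (1 - cos (Λ * c)) / (Λ * c ^ 2) := by
  have hderiv : ∀ r, HasDerivAt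
      (fun r => (1 - r / Λ) * sin (r * c) / c - cos (r * c) / (Λ * c ^ 2))
      ((1 - r / Λ) * cos (r * c)) r := by
    intro r
    have h := (((((hasDerivAt_id r).div_const Λ).const_sub 1).mul
      ((hasDerivAt_mul_const c).sin)).div_const c).sub
        (((hasDerivAt_mul_const c).cos).div_const (Λ * c ^ 2))
    refine h.congr_deriv ?_
    simp only [id]
    field_simp
    ring
  rw [intervalIntegral.integral_eq_sub_of_hasDerivAt (fun r _ => hderiv r)
    (by apply Continuous.intervalIntegrable; fun_prop)]
  field_simp
  simp
  ring

lemma cosineTransform_tent {Λ : ℝ} (hΛ : 0 < Λ) (x : ℝ) :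
    cosineTransform (tent Λ) x = 2 * π * fejerKernel Λ x := by
  set f : ℝ → ℝ := fun r => cos (r * x) * tent Λ r
  have hf_abs : ∀ s, f |s| = cos (s * x) * tent Λ s := fun s => by
    rcases abs_choice s with h | h <;> simp [f, tent, h, neg_mul]
  have half_line : ∫ r in Set.Ioi 0, f r = ∫ r in (0)..Λ, (1 - r / Λ) * cos (r * x) := by
    rw [setIntegral_eq_of_subset_of_forall_sdiff_eq_zero measurableSet_Ioi Set.Ioc_subset_Ioi_self
      fun r hr => ?_, ← intervalIntegral.integral_of_le hΛ.le]
    · refine intervalIntegral.integral_congr fun r hr => ?_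
      rw [Set.uIcc_of_le hΛ.le] at hr
      simp only [f, tent_of_mem_Icc hΛ hr, mul_comm]
    · have hr' : Λ ≤ |r| := by
        rw [abs_of_pos hr.1]; by_contra! h; exact hr.2 ⟨hr.1, h.le⟩
      simp only [f, tent_eq_zero_of_le_abs hΛ hr', mul_zero]
  rw [cosineTransform, ← funext hf_abs, integral_comp_abs, half_line]
  rcases eq_or_ne x 0 with rfl | hx
  · simp [fejerKernel, integral_id]
    field_simp
    norm_num
  · rw [integral_one_sub_div_mul_cos hΛ.ne' hx, mul_assoc, pi_mul_fejerKernel_of_ne_zero hΛ.ne' hx]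

lemma cosineTransform_fejerKernel {Λ : ℝ} (hΛ : 0 < Λ) (t : ℝ) :
    cosineTransform (fejerKernel Λ) t = tent Λ t := by
  have hinv := cosineTransform_cosineTransform (continuous_tent Λ) (integrable_tent hΛ)
    (tent_neg Λ) (by simpa only [funext (cosineTransform_tent hΛ)] using
      (integrable_fejerKernel hΛ).const_mul (2 * π)) t
  rw [funext (cosineTransform_tent hΛ), cosineTransform_const_mul] at hinv
  exact mul_left_cancel₀ (by positivity) hinv

/-- Two-way Fejér identity (Lemma 1.2): for all `γ, t ∈ ℝ`,
`1 − max(1 − |t|/Λ, 0)·cos(γt) = ∫ (1 − cos(ξt)) F_Λ(γ − ξ) dξ`. -/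
theorem two_way_fejer (Λ : ℝ) (hΛ : 0 < Λ) (γ t : ℝ) :
    1 - max (1 - |t| / Λ) 0 * Real.cos (γ * t)
      = ∫ ξ : ℝ, (1 - Real.cos (ξ * t)) * fejerKernel Λ (γ - ξ) := by
  have hF := integrable_fejerKernel hΛ
  have hmass : ∫ u, fejerKernel Λ u = 1 := by
    simpa [cosineTransform, tent] using cosineTransform_fejerKernel hΛ 0
  have hexpand : ∀ u, (1 - cos ((γ - u) * t)) * fejerKernel Λ u = fejerKernel Λ u
      - cos (γ * t) * (cos (u * t) * fejerKernel Λ u)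
      - sin (γ * t) * (sin (u * t) * fejerKernel Λ u) := fun u => by
    rw [sub_mul γ, cos_sub]; ring
  rw [← integral_sub_left_eq_self _ volume γ]
  simp only [sub_sub_cancel, hexpand]
  rw [integral_sub ?_ ((integrable_sin_mul hF t).const_mul _),
    integral_sub hF ((integrable_cos_mul hF t).const_mul _), integral_const_mul,
    integral_const_mul, hmass, ← cosineTransform, cosineTransform_fejerKernel hΛ,
    integral_sin_mul_eq_zero_of_even (fejerKernel_neg Λ), tent]
  · ring
  · exact hF.sub ((integrable_cos_mul hF t).const_mul _)
end
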